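/- arXiv:math/0506623 — 2 statements merged into one kernel-verified Lean document; each statement's English description precedes it below -/
import Mathlib

section
/- Let G act properly on Q and let H = G_q be the stabilizer of a point q ∈ Q. Choose a G-invariant Riemannian metric and a linear slice S_q at q (the orthogonal complement of the tangent space to the orbit in T_qQ). For a tangent vector v = ξ_Q(q) + s ∈ T_qQ with s ∈ S_q and ξ ∈ 𝔤, the stabilizer of v under the tangent-lifted action is G_v = H_s ∩ H_{[ξ]}, where H acts linearly on S_q and on 𝔤/𝔥 via the induced adjoint action h·[ξ] = [Ad_h ξ]. -/
/-! The lifted action preserves the splitting `T_qQ = 𝔤·q ⊕ S_q`, so `h` fixes `ξ_Q(q) + s` exactly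
when it fixes both components. It fixes `ξ_Q(q)` iff `Ad_h ξ - ξ` lies in the kernel `𝔥` of
`ξ ↦ ξ_Q(q)`, i.e. iff it fixes `[ξ] ∈ 𝔤/𝔥`. -/

section

variable {R H M : Type*} [Ring R] [Group H] [AddCommGroup M] [Module R M] [DistribMulAction H M]

theorem MulAction.stabilizer_add_eq_inf_of_disjoint {A B : Submodule R M} (hAB : Disjoint A B)
    (hA : ∀ (h : H), ∀ a ∈ A, h • a ∈ A) (hB : ∀ (h : H), ∀ b ∈ B, h • b ∈ B)
    {a b : M} (ha : a ∈ A) (hb : b ∈ B) :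
    MulAction.stabilizer H (a + b) = MulAction.stabilizer H a ⊓ MulAction.stabilizer H b := by
  ext h
  simp only [MulAction.mem_stabilizer_iff, Subgroup.mem_inf, smul_add]
  refine ⟨fun hfix => ?_, fun ⟨ha', hb'⟩ => by rw [ha', hb']⟩
  have hdiff : h • a - a = b - h • b := by linear_combination (norm := abel) hfix
  have hzero : h • a - a = 0 :=
    Submodule.disjoint_def.mp hAB _ (A.sub_mem (hA h a ha) ha)
      (hdiff ▸ B.sub_mem hb (hB h b hb))
  refine ⟨sub_eq_zero.mp hzero, ?_⟩
  rw [hzero, eq_comm, sub_eq_zero] at hdiff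
  exact hdiff.symm

theorem LinearMap.smul_mem_range_of_equivariant {N : Type*} [AddCommGroup N] [Module R N]
    [SMul H N] {f : N →ₗ[R] M} (hf : ∀ (h : H) (x : N), f (h • x) = h • f x) (h : H)
    {y : M} (hy : y ∈ LinearMap.range f) : h • y ∈ LinearMap.range f := by
  obtain ⟨x, rfl⟩ := hy
  exact ⟨h • x, hf h x⟩

theorem MulAction.stabilizer_apply_eq_stabilizer_mk_ker {N : Type*} [AddCommGroup N]
    [Module R N] [SMul H N] {K : Submodule R N} [MulAction H (N ⧸ K)] {f : N →ₗ[R] M}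
    (hker : LinearMap.ker f = K) (hf : ∀ (h : H) (x : N), f (h • x) = h • f x)
    (hquot : ∀ (h : H) (x : N),
      h • (Submodule.Quotient.mk x : N ⧸ K) = Submodule.Quotient.mk (h • x))
    (x : N) :
    MulAction.stabilizer H (f x) = MulAction.stabilizer H (Submodule.Quotient.mk x : N ⧸ K) := by
  ext h
  rw [MulAction.mem_stabilizer_iff, MulAction.mem_stabilizer_iff, hquot,
    Submodule.Quotient.eq, ← hker, LinearMap.mem_ker, map_sub, sub_eq_zero, hf]

end

theorem stmt1 {H 𝔤 T : Type*} [Group H]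
    [AddCommGroup 𝔤] [Module ℝ 𝔤] [AddCommGroup T] [Module ℝ T]
    [DistribMulAction H 𝔤] [DistribMulAction H T]
    (𝔥 : Submodule ℝ 𝔤)
    -- induced action of `H` on `𝔤/𝔥` (the adjoint action descends to the quotient)
    [DistribMulAction H (𝔤 ⧸ 𝔥)]
    (hquot : ∀ (h : H) (ξ : 𝔤),
      h • (Submodule.Quotient.mk ξ : 𝔤 ⧸ 𝔥) = Submodule.Quotient.mk (h • ξ))
    -- infinitesimal generator map at `q`, with kernel `𝔥`, `H`-equivariant
    (genq : 𝔤 →ₗ[ℝ] T)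
    (hker : LinearMap.ker genq = 𝔥)
    (hequiv : ∀ (h : H) (ξ : 𝔤), genq (h • ξ) = h • genq ξ)
    -- the slice: an `H`-invariant complement to the orbit directions
    (Sq : Submodule ℝ T)
    (hSinv : ∀ (h : H), ∀ s ∈ Sq, h • s ∈ Sq)
    (hcompl : IsCompl (LinearMap.range genq) Sq)
    (ξ : 𝔤) (s : T) (hs : s ∈ Sq) :
    MulAction.stabilizer H (genq ξ + s) =
      MulAction.stabilizer H (Submodule.Quotient.mk ξ : 𝔤 ⧸ 𝔥) ⊓
        MulAction.stabilizer H s := by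
  rw [MulAction.stabilizer_add_eq_inf_of_disjoint hcompl.disjoint
      (fun h _ => LinearMap.smul_mem_range_of_equivariant hequiv h) hSinv
      (LinearMap.mem_range_self genq ξ) hs,
    MulAction.stabilizer_apply_eq_stabilizer_mk_ker hker hequiv hquot]
end

section
/- For the diagonal S¹-action on ℝ²×ℝ² with invariants σ₁,σ₂,σ₃,σ₄ as above, the map (x,y) ↦ (σ₂, σ₃, σ₁) induces a bijection (in fact a homeomorphism) from the quotient {(x,y) ∈ ℝ²×ℝ² : σ₄(x,y)=0, σ₁(x,y)+σ₃(x,y)=2}/S¹ onto the parabola {(σ₂,σ₃,σ₁) ∈ ℝ³ : σ₁ ≥ 0, σ₁² = σ₂² + σ₃², σ₁ + σ₃ = 2}. -/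
noncomputable def rot (θ : ℝ) (p : ℝ × ℝ) : ℝ × ℝ :=
  (p.1 * Real.cos θ - p.2 * Real.sin θ, p.1 * Real.sin θ + p.2 * Real.cos θ)

def sig1 (x y : ℝ × ℝ) : ℝ := x.1 ^ 2 + x.2 ^ 2 + y.1 ^ 2 + y.2 ^ 2
def sig2 (x y : ℝ × ℝ) : ℝ := 2 * (x.1 * y.1 + x.2 * y.2)
def sig3 (x y : ℝ × ℝ) : ℝ := y.1 ^ 2 + y.2 ^ 2 - x.1 ^ 2 - x.2 ^ 2
def sig4 (x y : ℝ × ℝ) : ℝ := x.1 * y.2 - x.2 * y.1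

/-- The zero level set of the contact momentum map on the unit cosphere bundle `S*ℝ²`,
cut out by `σ₄ = 0` and `σ₁ + σ₃ = 2` inside `T*ℝ² = ℝ²×ℝ²`. -/
def Jzero : Set ((ℝ × ℝ) × (ℝ × ℝ)) :=
  {p | sig4 p.1 p.2 = 0 ∧ sig1 p.1 p.2 + sig3 p.1 p.2 = 2}

/-- The Hilbert map `(x,y) ↦ (σ₂, σ₃, σ₁)`. -/
def hilbertMap (p : (ℝ × ℝ) × (ℝ × ℝ)) : ℝ × ℝ × ℝ :=
  (sig2 p.1 p.2, sig3 p.1 p.2, sig1 p.1 p.2)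

/-- The parabola `{σ₁ ≥ 0, σ₁² = σ₂² + σ₃², σ₁ + σ₃ = 2}` in `ℝ³ = {(σ₂,σ₃,σ₁)}`. -/
def parabola : Set (ℝ × ℝ × ℝ) :=
  {v | 0 ≤ v.2.2 ∧ v.2.2 ^ 2 = v.1 ^ 2 + v.2.1 ^ 2 ∧ v.2.2 + v.2.1 = 2}

/-- Auxiliary: any point on the unit circle is `(cos θ, sin θ)` for some `θ`. -/
lemma exists_cos_sin_eq {c s : ℝ} (h : c ^ 2 + s ^ 2 = 1) :
    ∃ θ : ℝ, Real.cos θ = c ∧ Real.sin θ = s := by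
  have hz : (Complex.mk c s) ≠ 0 := by
    intro hz
    rw [Complex.ext_iff] at hz
    simp at hz
    rw [hz.1, hz.2] at h
    norm_num at h
  have habs : ‖Complex.mk c s‖ = 1 := by
    have h2 : (‖Complex.mk c s‖) ^ 2 = 1 := by
      rw [Complex.sq_norm, Complex.normSq_mk]
      linarith [h]
    nlinarith [norm_nonneg (Complex.mk c s)]
  refine ⟨Complex.arg (Complex.mk c s), ?_, ?_⟩
  · rw [Complex.cos_arg hz, habs]; simp
  · rw [Complex.sin_arg, habs]; simp

/- STATEMENT 5: the Hilbert map separates the `S¹`-orbits on `J⁻¹(0)` and maps it onto the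
parabola; i.e. it induces a bijection `J⁻¹(0)/S¹ ≃ parabola`. -/
theorem stmt5 :
    (∀ p ∈ Jzero, ∀ q ∈ Jzero,
      (hilbertMap p = hilbertMap q ↔ ∃ θ : ℝ, (rot θ p.1, rot θ p.2) = q)) ∧
    hilbertMap '' Jzero = parabola := by
  constructor
  · rintro ⟨x, y⟩ ⟨h4p, hnp⟩ ⟨u, v⟩ ⟨h4q, hnq⟩
    simp only [sig1, sig2, sig3, sig4, hilbertMap, Prod.ext_iff] at *
    have ny : y.1 ^ 2 + y.2 ^ 2 = 1 := by linarith
    have nv : v.1 ^ 2 + v.2 ^ 2 = 1 := by linarith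
    constructor
    · rintro ⟨e2, e3, e1⟩
      have hx1 : x.1 = (x.1 * y.1 + x.2 * y.2) * y.1 := by
        linear_combination y.2 * h4p - x.1 * ny
      have hx2 : x.2 = (x.1 * y.1 + x.2 * y.2) * y.2 := by
        linear_combination (-y.1) * h4p - x.2 * ny
      have hu1 : u.1 = (u.1 * v.1 + u.2 * v.2) * v.1 := by
        linear_combination v.2 * h4q - u.1 * nv
      have hu2 : u.2 = (u.1 * v.1 + u.2 * v.2) * v.2 := by
        linear_combination (-v.1) * h4q - u.2 * nv
      have hl : x.1 * y.1 + x.2 * y.2 = u.1 * v.1 + u.2 * v.2 := by linarith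
      obtain ⟨θ, hc, hs⟩ := exists_cos_sin_eq
        (c := y.1 * v.1 + y.2 * v.2) (s := y.1 * v.2 - y.2 * v.1)
        (by linear_combination (v.1 ^ 2 + v.2 ^ 2) * ny + nv)
      refine ⟨θ, ?_⟩
      have hyv1 : y.1 * Real.cos θ - y.2 * Real.sin θ = v.1 := by
        rw [hc, hs]; linear_combination v.1 * ny
      have hyv2 : y.1 * Real.sin θ + y.2 * Real.cos θ = v.2 := by
        rw [hc, hs]; linear_combination v.2 * ny
      have hxu1 : x.1 * Real.cos θ - x.2 * Real.sin θ = u.1 := by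
        linear_combination Real.cos θ * hx1 - Real.sin θ * hx2 +
          (x.1 * y.1 + x.2 * y.2) * hyv1 + v.1 * hl - hu1
      have hxu2 : x.1 * Real.sin θ + x.2 * Real.cos θ = u.2 := by
        linear_combination Real.sin θ * hx1 + Real.cos θ * hx2 +
          (x.1 * y.1 + x.2 * y.2) * hyv2 + v.2 * hl - hu2
      simp [rot, Prod.ext_iff, hyv1, hyv2, hxu1, hxu2]
    · rintro ⟨θ, hθ⟩
      have pyth := Real.sin_sq_add_cos_sq θ
      simp only [rot, Prod.ext_iff] at hθ
      obtain ⟨⟨hu1, hu2⟩, hv1, hv2⟩ := hθ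
      rw [← hu1, ← hu2, ← hv1, ← hv2]
      refine ⟨?_, ?_, ?_⟩
      · linear_combination (-2 * (x.1 * y.1 + x.2 * y.2)) * pyth
      · linear_combination (x.1 ^ 2 + x.2 ^ 2 - y.1 ^ 2 - y.2 ^ 2) * pyth
      · linear_combination (-(x.1 ^ 2 + x.2 ^ 2 + y.1 ^ 2 + y.2 ^ 2)) * pyth
  · ext ⟨a, b, c⟩
    simp only [Set.mem_image, Jzero, hilbertMap, parabola, Set.mem_setOf_eq,
      sig1, sig2, sig3, sig4, Prod.ext_iff]
    constructor
    · rintro ⟨⟨x, y⟩, ⟨h4, hn⟩, ha, hb, hc⟩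
      dsimp only at h4 hn ha hb hc
      refine ⟨?_, ?_, ?_⟩
      · nlinarith [sq_nonneg x.1, sq_nonneg x.2, sq_nonneg y.1, sq_nonneg y.2, hc]
      · linear_combination -(x.1^2 + x.2^2 + y.1^2 + y.2^2 + c) * hc +
          (2 * (x.1 * y.1 + x.2 * y.2) + a) * ha +
          (y.1^2 + y.2^2 - x.1^2 - x.2^2 + b) * hb +
          4 * (x.1 * y.2 - x.2 * y.1) * h4
      · linarith
    · rintro ⟨hc0, hsq, hsum⟩
      have hc2 : c = 2 - b := by linarith
      have key : 4 - 4 * b = a ^ 2 := by linear_combination hsq - (c + 2 - b) * hc2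
      refine ⟨((a / 2, 0), (1, 0)), ⟨by simp [sig4], by simp only [sig1, sig3]; ring⟩,
        ?_, ?_, ?_⟩
      · simp only [sig2]; ring
      · simp only [sig3]; linear_combination (1/4) * key
      · simp only [sig1]; linear_combination (-(1/4)) * key - hc2
end
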